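/- Let P, Q : [0,1] → ℝ^d be continuous curves, let ε > 0, and let σ, τ : [0,1] → [0,1] be continuous nondecreasing surjections such that sup_{t ∈ [0,1]} dist(P(σ(t)), Q(τ(t))) ≤ ε. Then for all 0 ≤ u ≤ v ≤ 1, the Fréchet distance between the subcurve of P on the parameter interval [σ(u), σ(v)] and the subcurve of Q on the parameter interval [τ(u), τ(v)] (each reparametrized affinely onto [0,1]; a degenerate interval gives a constant curve) is at most ε. -/

import Mathlib

open Set Metric

noncomputable section

/-- Euclidean space ℝ^d. -/
abbrev Euc (d : ℕ) := EuclideanSpace ℝ (Fin d)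

/-- A pair of continuous nondecreasing surjections from `[0,1]` onto `[0,1]`. -/
def IsReparamPair (σ τ : ℝ → ℝ) : Prop :=
  ContinuousOn σ (Set.Icc 0 1) ∧ MonotoneOn σ (Set.Icc 0 1) ∧
    σ '' Set.Icc 0 1 = Set.Icc 0 1 ∧
  ContinuousOn τ (Set.Icc 0 1) ∧ MonotoneOn τ (Set.Icc 0 1) ∧
    τ '' Set.Icc 0 1 = Set.Icc 0 1

/-- The Fréchet distance between two curves `[0,1] → ℝ^d`. -/
noncomputable def frechetDist {d : ℕ} (P Q : ℝ → Euc d) : ℝ :=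
  sInf {r : ℝ | ∃ σ τ : ℝ → ℝ, IsReparamPair σ τ ∧
    r = ⨆ t : Set.Icc (0 : ℝ) 1, dist (P (σ t)) (Q (τ t))}

/-- The polygonal curve with vertices `q 0, …, q n` (so `n` segments),
linearly parametrizing the segment from `q j` to `q (j+1)` on `[j/n, (j+1)/n]`. -/
noncomputable def polyCurve {d : ℕ} (q : ℕ → Euc d) (n : ℕ) (t : ℝ) : Euc d :=
  let j : ℕ := min (⌊t * n⌋.toNat) (n - 1)
  (1 - (t * n - j)) • q j + (t * n - j) • q (j + 1)

/-- The segment from `a` to `b` as a curve on `[0,1]`. -/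
def segCurve {d : ℕ} (a b : Euc d) (t : ℝ) : Euc d := (1 - t) • a + t • b

/-!
Restricting a matching `(σ, τ)` of `P` and `Q` to `[u, v]` and renormalising each of
`σ ∘ ℓ` and `τ ∘ ℓ` (with `ℓ` the affine map `[0,1] → [u,v]`) affinely onto `[0,1]` gives a
matching of the two subcurves that traverses exactly the pairs of points `(P (σ s), Q (τ s))`,
`s ∈ [u, v]`, already matched within `ε`. When `σ u = σ v` the renormalisation is
meaningless, but then `σ` is constant on `[u, v]` and the identity does the job.
-/

def IsReparam (σ : ℝ → ℝ) : Prop :=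
  ContinuousOn σ (Icc 0 1) ∧ MonotoneOn σ (Icc 0 1) ∧ σ '' Icc 0 1 = Icc 0 1

lemma isReparamPair_iff {σ τ : ℝ → ℝ} : IsReparamPair σ τ ↔ IsReparam σ ∧ IsReparam τ := by
  simp only [IsReparamPair, IsReparam, and_assoc]

lemma IsReparam.mapsTo {σ : ℝ → ℝ} (hσ : IsReparam σ) : MapsTo σ (Icc 0 1) (Icc 0 1) :=
  fun _ hx => hσ.2.2 ▸ mem_image_of_mem σ hx

lemma IsReparam.of_continuousOn_of_monotoneOn {σ : ℝ → ℝ} (hc : ContinuousOn σ (Icc 0 1))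
    (hm : MonotoneOn σ (Icc 0 1)) (h0 : σ 0 = 0) (h1 : σ 1 = 1) : IsReparam σ := by
  have h01 : (0 : ℝ) ∈ Icc 0 1 := left_mem_Icc.2 zero_le_one
  have h11 : (1 : ℝ) ∈ Icc 0 1 := right_mem_Icc.2 zero_le_one
  refine ⟨hc, hm, (image_subset_iff.2 fun t ht => ?_).antisymm ?_⟩
  · exact ⟨h0 ▸ hm h01 ht ht.1, h1 ▸ hm ht h11 ht.2⟩
  · simpa [h0, h1] using intermediate_value_Icc zero_le_one hc

lemma affineCombo_mem_Icc {u v t : ℝ} (huv : u ≤ v) (ht : t ∈ Icc (0 : ℝ) 1) :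
    (1 - t) * u + t * v ∈ Icc u v :=
  ⟨by nlinarith [ht.1, ht.2], by nlinarith [ht.1, ht.2]⟩

lemma exists_isReparam_affineCombo_eq {g : ℝ → ℝ} (hc : ContinuousOn g (Icc 0 1))
    (hm : MonotoneOn g (Icc 0 1)) :
    ∃ σ, IsReparam σ ∧ ∀ t ∈ Icc (0 : ℝ) 1, (1 - σ t) * g 0 + σ t * g 1 = g t := by
  have h01 : (0 : ℝ) ∈ Icc 0 1 := left_mem_Icc.2 zero_le_one
  have h11 : (1 : ℝ) ∈ Icc 0 1 := right_mem_Icc.2 zero_le_one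
  rcases (hm h01 h11 zero_le_one).eq_or_lt with hconst | hlt
  · refine ⟨id, ⟨continuousOn_id, monotoneOn_id, image_id _⟩, fun t ht => ?_⟩
    have hgt : g t = g 0 := le_antisymm (hconst ▸ hm ht h11 ht.2) (hm h01 ht ht.1)
    rw [hgt, ← hconst, id]
    ring
  · have hne : g 1 - g 0 ≠ 0 := (sub_pos.2 hlt).ne'
    refine ⟨fun t => (g t - g 0) / (g 1 - g 0),
      .of_continuousOn_of_monotoneOn ((hc.sub continuousOn_const).div_const _)
        (fun s hs t ht hst => div_le_div_of_nonneg_right (sub_le_sub_right (hm hs ht hst) _)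
          (sub_pos.2 hlt).le) (by simp) (div_self hne), fun t _ => ?_⟩
    field_simp
    ring

lemma exists_isReparam_affineCombo_eq_comp {σ : ℝ → ℝ} {u v : ℝ} (huv : u ≤ v)
    (hc : ContinuousOn σ (Icc u v)) (hm : MonotoneOn σ (Icc u v)) :
    ∃ σ', IsReparam σ' ∧ ∀ t ∈ Icc (0 : ℝ) 1,
      (1 - σ' t) * σ u + σ' t * σ v = σ ((1 - t) * u + t * v) := by
  have hmaps : MapsTo (fun t : ℝ => (1 - t) * u + t * v) (Icc 0 1) (Icc u v) :=
    fun _ ht => affineCombo_mem_Icc huv ht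
  have hmono : MonotoneOn (fun t : ℝ => σ ((1 - t) * u + t * v)) (Icc 0 1) :=
    fun s hs t ht hst => hm (hmaps hs) (hmaps ht) (by nlinarith)
  simpa using exists_isReparam_affineCombo_eq (hc.comp (by fun_prop) hmaps) hmono

lemma le_iSup_of_continuousOn {α : Type*} [TopologicalSpace α] {K : Set α} (hK : IsCompact K)
    {f : α → ℝ} (hf : ContinuousOn f K) {x : α} (hx : x ∈ K) : f x ≤ ⨆ y : K, f y :=
  le_ciSup (f := fun y : K => f y) (image_eq_range f K ▸ hK.bddAbove_image hf) ⟨x, hx⟩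

lemma frechetDist_le_of_forall_dist_le {d : ℕ} {P Q : ℝ → Euc d} {σ τ : ℝ → ℝ}
    (hστ : IsReparamPair σ τ) {ε : ℝ} (h : ∀ t ∈ Icc (0 : ℝ) 1, dist (P (σ t)) (Q (τ t)) ≤ ε) :
    frechetDist P Q ≤ ε := by
  have hε : 0 ≤ ε := dist_nonneg.trans (h 0 (left_mem_Icc.2 zero_le_one))
  have hbdd : BddBelow {r : ℝ | ∃ σ τ : ℝ → ℝ, IsReparamPair σ τ ∧
      r = ⨆ t : Icc (0 : ℝ) 1, dist (P (σ t)) (Q (τ t))} := by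
    refine ⟨0, ?_⟩
    rintro _ ⟨σ₁, τ₁, -, rfl⟩
    exact Real.iSup_nonneg fun _ => dist_nonneg
  exact (csInf_le hbdd ⟨σ, τ, hστ, rfl⟩).trans (Real.iSup_le (fun t => h t t.2) hε)

theorem frechetDist_subcurves_le_general {d : ℕ} (P Q : ℝ → Euc d)
    (hP : ContinuousOn P (Set.Icc 0 1)) (hQ : ContinuousOn Q (Set.Icc 0 1))
    (ε : ℝ) (σ τ : ℝ → ℝ) (hστ : IsReparamPair σ τ)
    (hsup : ⨆ t : Set.Icc (0 : ℝ) 1, dist (P (σ t)) (Q (τ t)) ≤ ε) :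
    ∀ u v : ℝ, 0 ≤ u → u ≤ v → v ≤ 1 →
      frechetDist (fun t => P ((1 - t) * σ u + t * σ v))
        (fun t => Q ((1 - t) * τ u + t * τ v)) ≤ ε := by
  intro u v hu huv hv
  obtain ⟨hσ, hτ⟩ := isReparamPair_iff.1 hστ
  have hdist : ∀ s ∈ Icc (0 : ℝ) 1, dist (P (σ s)) (Q (τ s)) ≤ ε := fun s hs =>
    (le_iSup_of_continuousOn isCompact_Icc
      (continuous_dist.comp_continuousOn
        ((hP.comp hσ.1 hσ.mapsTo).prodMk (hQ.comp hτ.1 hτ.mapsTo))) hs).trans hsup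
  have huv01 : Icc u v ⊆ Icc 0 1 := Icc_subset_Icc hu hv
  obtain ⟨σ', hσ', hσσ'⟩ :=
    exists_isReparam_affineCombo_eq_comp huv (hσ.1.mono huv01) (hσ.2.1.mono huv01)
  obtain ⟨τ', hτ', hττ'⟩ :=
    exists_isReparam_affineCombo_eq_comp huv (hτ.1.mono huv01) (hτ.2.1.mono huv01)
  refine frechetDist_le_of_forall_dist_le (isReparamPair_iff.2 ⟨hσ', hτ'⟩) fun t ht => ?_
  rw [hσσ' t ht, hττ' t ht]
  exact hdist _ (huv01 (affineCombo_mem_Icc huv ht))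

/-- If `σ, τ` witness a Fréchet matching of `P` and `Q` within `ε`, then corresponding
subcurves of `P` and `Q` (reparametrized affinely onto `[0,1]`) are also within Fréchet
distance `ε`. -/
theorem frechetDist_subcurves_le {d : ℕ} (P Q : ℝ → Euc d)
    (hP : ContinuousOn P (Set.Icc 0 1)) (hQ : ContinuousOn Q (Set.Icc 0 1))
    (ε : ℝ) (hε : 0 < ε) (σ τ : ℝ → ℝ) (hστ : IsReparamPair σ τ)
    (hsup : ⨆ t : Set.Icc (0 : ℝ) 1, dist (P (σ t)) (Q (τ t)) ≤ ε) :
    ∀ u v : ℝ, 0 ≤ u → u ≤ v → v ≤ 1 →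
      frechetDist (fun t => P ((1 - t) * σ u + t * σ v))
        (fun t => Q ((1 - t) * τ u + t * τ v)) ≤ ε :=
  frechetDist_subcurves_le_general P Q hP hQ ε σ τ hστ hsup
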